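/- Monotone decrease of the second-order objective along the fixed-point iteration (Theorem 3.3, estimate (3.8)): assume γ ∈ L¹(G) is even. Then (i) j[ζ](u) = J²(u) + (1/4)(γ*(u − ζ), u − ζ) for all u ∈ K and ζ ∈ L²(G). (ii) If moreover γ is positive semidefinite, u₀ = v, for each m ≥ 1 the iterate u_m ∈ K minimizes j[u_{m−1}] over K, and u* ∈ K minimizes J² over K, then for every m ≥ 1: J²(u*) ≤ J²(u_m) ≤ J²(u_{m−1}) ≤ J²(u₀) = E(v). -/

import Mathlib

open MeasureTheory

noncomputable section

/-- The `n`-dimensional torus: product of circles `ℝ/(Lᵢℤ)`. -/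
abbrev Torus (n : ℕ) (L : Fin n → ℝ) := Π i : Fin n, AddCircle (L i)

variable {n : ℕ} {L : Fin n → ℝ} [∀ i, Fact (0 < L i)]

/-- The `L²` inner product `(u,v) = ∫ u v`. -/
def ip (u v : Torus n L → ℝ) : ℝ := ∫ x, u x * v x

/-- The convolution `(γ*u)(x) = ∫ γ(x-y) u(y) dy`. -/
def conv (γ u : Torus n L → ℝ) : Torus n L → ℝ := fun x => ∫ y, γ (x - y) * u y

/-- `g(u) = (ξ/2)‖u‖² + c`. -/
def gfun (ξ c : ℝ) (u : Torus n L → ℝ) : ℝ := ξ / 2 * ip u u + c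

/-- `f(u) = −(1/2)(γ*u, u)`. -/
def ffun (γ : Torus n L → ℝ) (u : Torus n L → ℝ) : ℝ := -(1 / 2) * ip (conv γ u) u

/-- The energy `E(u) = g(u) + f(u) + Ψ(u)`. -/
def energyE (γ : Torus n L → ℝ) (ξ c : ℝ) (Ψ : (Torus n L → ℝ) → ℝ)
    (u : Torus n L → ℝ) : ℝ :=
  gfun ξ c u + ffun γ u + Ψ u

/-- Second-order implicit objective with previous iterate `v`:
`J²(u) = (1/(2τ))‖u−v‖² + (1/2)(g(v)+g(u)) + (1/2)(f(v)+f(u)) − (1/2)(γ*v, u−v)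
        + (ξ/2)(v, u−v) + Ψ(u)`. -/
def objJ2 (γ : Torus n L → ℝ) (τ ξ c : ℝ) (Ψ : (Torus n L → ℝ) → ℝ)
    (v u : Torus n L → ℝ) : ℝ :=
  1 / (2 * τ) * ip (u - v) (u - v) + 1 / 2 * (gfun ξ c v + gfun ξ c u)
    + 1 / 2 * (ffun γ v + ffun γ u) - 1 / 2 * ip (conv γ v) (u - v)
    + ξ / 2 * ip v (u - v) + Ψ u

/-- Fixed-point objective with previous iterate `v` and linearization point `ζ`:
`j[ζ](u) = (1/(2τ))‖u−v‖² + (1/2)(g(v)+g(u)) + (1/2)(f(v)+f(ζ)) − (1/2)(γ*v, u−v)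
          + (ξ/2)(v, u−v) − (1/2)(γ*ζ, u−ζ) + Ψ(u)`. -/
def objSmall (γ : Torus n L → ℝ) (τ ξ c : ℝ) (Ψ : (Torus n L → ℝ) → ℝ)
    (v ζ u : Torus n L → ℝ) : ℝ :=
  1 / (2 * τ) * ip (u - v) (u - v) + 1 / 2 * (gfun ξ c v + gfun ξ c u)
    + 1 / 2 * (ffun γ v + ffun γ ζ) - 1 / 2 * ip (conv γ v) (u - v)
    + ξ / 2 * ip v (u - v) - 1 / 2 * ip (conv γ ζ) (u - ζ) + Ψ u


section Aux

lemma aux_ae_comp {f : Torus n L → Torus n L} (hf : MeasurePreserving f volume volume)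
    {p : Torus n L → Prop} (h : ∀ᵐ x, p x) : ∀ᵐ x, p (f x) := by
  rw [ae_iff] at h ⊢
  exact hf.quasiMeasurePreserving.preimage_null h

lemma aux_integrable_mul {f g : Torus n L → ℝ} (hf : MemLp f 2) (hg : MemLp g 2) :
    Integrable (fun x => f x * g x) := by
  have h := L2.integrable_inner (𝕜 := ℝ) (hf.toLp f) (hg.toLp g)
  refine h.congr ?_
  filter_upwards [hf.coeFn_toLp, hg.coeFn_toLp] with x hx hy
  simp [hx, hy, RCLike.inner_apply, mul_comm]

lemma aux_memℒp_translate {g : Torus n L → ℝ} (hg : MemLp g 2) (t : Torus n L) :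
    MemLp (fun y => g (t + y)) 2 :=
  hg.comp_measurePreserving (measurePreserving_add_left volume t)

lemma aux_cs {f g : Torus n L → ℝ} (hf : MemLp f 2) (hg : MemLp g 2) :
    ∫ y, ‖f y * g y‖ ≤ (∫ y, ‖f y‖ ^ (2:ℝ)) ^ (1/2:ℝ) * (∫ y, ‖g y‖ ^ (2:ℝ)) ^ (1/2:ℝ) := by
  have h22 : Real.HolderConjugate 2 2 := by
    rw [Real.holderConjugate_iff_eq_conjExponent] <;> norm_num
  have h2 : ENNReal.ofReal (2:ℝ) = 2 := by
    rw [ENNReal.ofReal_ofNat]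
  have := integral_mul_norm_le_Lp_mul_Lq (μ := volume) (f := f) (g := g) h22
    (by rwa [h2]) (by rwa [h2])
  simpa [norm_mul] using this

lemma aux_translate_sq (g : Torus n L → ℝ) (t : Torus n L) :
    ∫ y, ‖g (t + y)‖ ^ (2:ℝ) = ∫ y, ‖g y‖ ^ (2:ℝ) :=
  (measurePreserving_add_left volume t).integral_comp
    (MeasurableEquiv.addLeft t).measurableEmbedding (fun y => ‖g y‖ ^ (2:ℝ))

lemma factA {γ f g : Torus n L → ℝ} (hγ : Integrable γ) (hf : MemLp f 2) (hg : MemLp g 2) :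
    Integrable (fun p : Torus n L × Torus n L => γ (p.1 - p.2) * (f p.2 * g p.1))
      (volume.prod volume) := by
  have hψ := measurePreserving_add_prod (volume : Measure (Torus n L)) volume
  have hφ := measurePreserving_sub_prod (volume : Measure (Torus n L)) volume
  have hgadd : AEStronglyMeasurable (fun z : Torus n L × Torus n L => g (z.1 + z.2))
      (volume.prod volume) := by
    have heq : (fun z : Torus n L × Torus n L => g (z.1 + z.2))
        = (fun w : Torus n L × Torus n L => g w.1) ∘ (fun z => (z.1 + z.2, z.2)) := rfl
    rw [heq]
    exact (hg.1.comp_fst).comp_quasiMeasurePreserving hψ.quasiMeasurePreserving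
  have hHm : AEStronglyMeasurable
      (fun z : Torus n L × Torus n L => γ z.1 * (f z.2 * g (z.1 + z.2))) (volume.prod volume) :=
    (hγ.1.comp_fst).mul ((hf.1.comp_snd).mul hgadd)
  set A : ℝ := (∫ y, ‖f y‖ ^ (2:ℝ)) ^ (1/2:ℝ) with hA
  set B : ℝ := (∫ y, ‖g y‖ ^ (2:ℝ)) ^ (1/2:ℝ) with hB
  have hH : Integrable (fun z : Torus n L × Torus n L => γ z.1 * (f z.2 * g (z.1 + z.2)))
      (volume.prod volume) := by
    rw [integrable_prod_iff hHm]
    constructor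
    · refine Filter.Eventually.of_forall fun t => ?_
      have h1 : Integrable (fun y => f y * g (t + y)) :=
        aux_integrable_mul hf (aux_memℒp_translate hg t)
      simpa [mul_assoc] using h1.const_mul (γ t)
    · have hb : ∀ t : Torus n L, ∫ y, ‖γ t * (f y * g (t + y))‖ ≤ ‖γ t‖ * (A * B) := by
        intro t
        have e1 : ∫ y, ‖γ t * (f y * g (t + y))‖ = ‖γ t‖ * ∫ y, ‖f y * g (t + y)‖ := by
          simp_rw [norm_mul]
          exact integral_const_mul _ _
        rw [e1]
        have h2 : ∫ y, ‖f y * g (t + y)‖ ≤ A * B := by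
          have := aux_cs hf (aux_memℒp_translate hg t)
          rwa [aux_translate_sq g t, ← hA, ← hB] at this
        exact mul_le_mul_of_nonneg_left h2 (norm_nonneg _)
      refine (hγ.norm.mul_const (A * B)).mono' (hHm.norm.integral_prod_right') ?_
      refine Filter.Eventually.of_forall fun t => ?_
      rw [Real.norm_of_nonneg (integral_nonneg fun y => norm_nonneg _)]
      exact hb t
  have hcomp := (hφ.integrable_comp hHm).2 hH
  refine hcomp.congr (Filter.Eventually.of_forall fun p => ?_)
  simp [Function.comp, sub_add_cancel]

lemma factA' {γ f : Torus n L → ℝ} (hγ : Integrable γ) (hf : MemLp f 2) :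
    Integrable (fun p : Torus n L × Torus n L => γ (p.1 - p.2) * f p.2)
      (volume.prod volume) := by
  simpa [mul_one] using factA hγ hf (memLp_const (1:ℝ))

lemma ae_slice {γ f : Torus n L → ℝ} (hγ : Integrable γ) (hf : MemLp f 2) :
    ∀ᵐ x, Integrable (fun y => γ (x - y) * f y) :=
  (factA' hγ hf).prod_right_ae

lemma integrable_conv_mul {γ a b : Torus n L → ℝ} (hγ : Integrable γ)
    (ha : MemLp a 2) (hb : MemLp b 2) :
    Integrable (fun x => conv γ a x * b x) := by
  have h := (factA hγ ha hb).integral_prod_left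
  refine h.congr (Filter.Eventually.of_forall fun x => ?_)
  show ∫ y, γ (x - y) * (a y * b x) = conv γ a x * b x
  simp only [conv, ← mul_assoc]
  exact integral_mul_const _ _

lemma ip_conv_double {γ a b : Torus n L → ℝ} :
    ip (conv γ a) b = ∫ x, ∫ y, γ (x - y) * (a y * b x) := by
  refine integral_congr_ae (Filter.Eventually.of_forall fun x => ?_)
  show conv γ a x * b x = _
  simp only [conv, ← mul_assoc]
  exact (integral_mul_const _ _).symm

lemma ip_symm {γ a b : Torus n L → ℝ} (hγ : Integrable γ)
    (heven : ∀ᵐ x, γ (-x) = γ x) (ha : MemLp a 2) (hb : MemLp b 2) :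
    ip (conv γ a) b = ip (conv γ b) a := by
  rw [ip_conv_double, ip_conv_double,
    integral_integral_swap (by exact factA hγ ha hb)]
  refine integral_congr_ae (Filter.Eventually.of_forall fun p => ?_)
  refine integral_congr_ae ?_
  have he : ∀ᵐ q, γ (-(q - p)) = γ (q - p) :=
    aux_ae_comp (measurePreserving_sub_right volume p) heven
  filter_upwards [he] with q hq
  rw [neg_sub] at hq
  rw [hq]; ring

lemma conv_sub_ae {γ u ζ : Torus n L → ℝ} (hγ : Integrable γ)
    (hu : MemLp u 2) (hζ : MemLp ζ 2) :
    ∀ᵐ x, conv γ (u - ζ) x = conv γ u x - conv γ ζ x := by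
  filter_upwards [ae_slice hγ hu, ae_slice hγ hζ] with x h1 h2
  simp only [conv, Pi.sub_apply, mul_sub]
  exact integral_sub h1 h2

lemma ip_conv_sub_right {γ w u ζ : Torus n L → ℝ} (hγ : Integrable γ)
    (hw : MemLp w 2) (hu : MemLp u 2) (hζ : MemLp ζ 2) :
    ip (conv γ w) (u - ζ) = ip (conv γ w) u - ip (conv γ w) ζ := by
  unfold ip
  rw [← integral_sub (integrable_conv_mul hγ hw hu) (integrable_conv_mul hγ hw hζ)]
  refine integral_congr_ae (Filter.Eventually.of_forall fun x => ?_)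
  simp [Pi.sub_apply, mul_sub]

lemma key_expand {γ u ζ : Torus n L → ℝ} (hγ : Integrable γ)
    (heven : ∀ᵐ x, γ (-x) = γ x) (hu : MemLp u 2) (hζ : MemLp ζ 2) :
    ip (conv γ (u - ζ)) (u - ζ)
      = ip (conv γ u) u - 2 * ip (conv γ ζ) u + ip (conv γ ζ) ζ := by
  have h1 := integrable_conv_mul hγ hu hu
  have h2 := integrable_conv_mul hγ hu hζ
  have h3 := integrable_conv_mul hγ hζ hu
  have h4 := integrable_conv_mul hγ hζ hζ
  have e : ip (conv γ (u - ζ)) (u - ζ)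
      = ∫ x, ((conv γ u x * u x - conv γ u x * ζ x)
          - (conv γ ζ x * u x - conv γ ζ x * ζ x)) := by
    unfold ip
    refine integral_congr_ae ?_
    filter_upwards [conv_sub_ae hγ hu hζ] with x hx
    rw [hx]
    simp only [Pi.sub_apply]
    ring
  have h12 : Integrable (fun x => conv γ u x * u x - conv γ u x * ζ x) volume := h1.sub h2
  have h34 : Integrable (fun x => conv γ ζ x * u x - conv γ ζ x * ζ x) volume := h3.sub h4
  rw [e, integral_sub h12 h34, integral_sub h1 h2, integral_sub h3 h4]
  have hsym : ∫ x, conv γ u x * ζ x = ∫ x, conv γ ζ x * u x :=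
    ip_symm hγ heven hu hζ
  simp only [ip]
  rw [hsym]
  ring

lemma identity_aux {γ : Torus n L → ℝ} (hγ : Integrable γ)
    (heven : ∀ᵐ x, γ (-x) = γ x) (τ ξ c : ℝ) (Ψ : (Torus n L → ℝ) → ℝ)
    {v ζ u : Torus n L → ℝ} (hζ : MemLp ζ 2) (hu : MemLp u 2) :
    objSmall γ τ ξ c Ψ v ζ u
      = objJ2 γ τ ξ c Ψ v u + 1 / 4 * ip (conv γ (u - ζ)) (u - ζ) := by
  have hk := key_expand hγ heven hu hζ
  have hs := ip_conv_sub_right hγ hζ hu hζ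
  simp only [objSmall, objJ2, ffun]
  rw [hk, hs]
  ring

lemma ip_zero_aux {γ w : Torus n L → ℝ} : ip (conv γ (w - w)) (w - w) = 0 := by
  simp [ip, conv, sub_self]

lemma objJ2_self {γ : Torus n L → ℝ} (τ ξ c : ℝ) (Ψ : (Torus n L → ℝ) → ℝ)
    (v : Torus n L → ℝ) : objJ2 γ τ ξ c Ψ v v = energyE γ ξ c Ψ v := by
  have h0 : ∀ w : Torus n L → ℝ, ip w (0 : Torus n L → ℝ) = 0 := by
    intro w; simp [ip]
  simp only [objJ2, energyE, sub_self, h0]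
  ring

end Aux

/-- **Monotone decrease of the second-order objective along the fixed-point iteration**
(Theorem 3.3, estimate (3.8)): for even `γ ∈ L¹`,
(i) `j[ζ](u) = J²(u) + (1/4)(γ*(u−ζ), u−ζ)` for all `u ∈ K`, `ζ ∈ L²`;
(ii) if moreover `γ` is positive semidefinite, `u₀ = v`, each `u_m ∈ K` minimizes
`j[u_{m−1}]` over `K`, and `u* ∈ K` minimizes `J²` over `K`, then for every `m ≥ 1`
`J²(u*) ≤ J²(u_m) ≤ J²(u_{m−1}) ≤ J²(u₀) = E(v)`. -/
theorem fixed_point_monotone_decrease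
    {n : ℕ} (hn : 1 ≤ n) {L : Fin n → ℝ} [∀ i, Fact (0 < L i)]
    (γ : Torus n L → ℝ) (hγL1 : Integrable γ)
    (hγeven : ∀ᵐ x, γ (-x) = γ x)
    (τ : ℝ) (hτ : 0 < τ) (ξ : ℝ) (hξ : 0 ≤ ξ) (c : ℝ)
    (K : Set (Torus n L → ℝ)) (hKne : K.Nonempty)
    (hKL2 : ∀ u ∈ K, MemLp u 2)
    (Ψ : (Torus n L → ℝ) → ℝ)
    (v : Torus n L → ℝ) (hv : v ∈ K) :
    (∀ ζ : Torus n L → ℝ, MemLp ζ 2 → ∀ u ∈ K,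
        objSmall γ τ ξ c Ψ v ζ u
          = objJ2 γ τ ξ c Ψ v u + 1 / 4 * ip (conv γ (u - ζ)) (u - ζ)) ∧
      ((∀ w : Torus n L → ℝ, MemLp w 2 → 0 ≤ ip (conv γ w) w) →
        ∀ useq : ℕ → Torus n L → ℝ, useq 0 = v →
        (∀ m : ℕ, 1 ≤ m → useq m ∈ K ∧
            ∀ w ∈ K, objSmall γ τ ξ c Ψ v (useq (m - 1)) (useq m)
              ≤ objSmall γ τ ξ c Ψ v (useq (m - 1)) w) →
        ∀ ustar ∈ K, (∀ w ∈ K, objJ2 γ τ ξ c Ψ v ustar ≤ objJ2 γ τ ξ c Ψ v w) →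
        ∀ m : ℕ, 1 ≤ m →
          objJ2 γ τ ξ c Ψ v ustar ≤ objJ2 γ τ ξ c Ψ v (useq m) ∧
          objJ2 γ τ ξ c Ψ v (useq m) ≤ objJ2 γ τ ξ c Ψ v (useq (m - 1)) ∧
          objJ2 γ τ ξ c Ψ v (useq (m - 1)) ≤ objJ2 γ τ ξ c Ψ v (useq 0) ∧
          objJ2 γ τ ξ c Ψ v (useq 0) = energyE γ ξ c Ψ v) := by
  constructor
  · intro ζ hζ u hu
    exact identity_aux hγL1 hγeven τ ξ c Ψ hζ (hKL2 u hu)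
  · intro hpsd useq h0 hseq ustar hustar hstarmin m hm
    have memK : ∀ k, useq k ∈ K := by
      intro k
      rcases Nat.eq_zero_or_pos k with h | h
      · rw [h, h0]; exact hv
      · exact (hseq k h).1
    have step : ∀ k, 1 ≤ k →
        objJ2 γ τ ξ c Ψ v (useq k) ≤ objJ2 γ τ ξ c Ψ v (useq (k - 1)) := by
      intro k hk
      have hζ2 := hKL2 _ (memK (k - 1))
      have hu2 := hKL2 _ (memK k)
      have hid1 := identity_aux hγL1 hγeven τ ξ c Ψ (v := v) hζ2 hu2
      have hid2 := identity_aux hγL1 hγeven τ ξ c Ψ (v := v) hζ2 hζ2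
      rw [ip_zero_aux] at hid2
      have hmin := (hseq k hk).2 (useq (k - 1)) (memK (k - 1))
      have hq : 0 ≤ ip (conv γ (useq k - useq (k - 1))) (useq k - useq (k - 1)) :=
        hpsd _ (hu2.sub hζ2)
      linarith
    have chain : ∀ k, objJ2 γ τ ξ c Ψ v (useq k) ≤ objJ2 γ τ ξ c Ψ v (useq 0) := by
      intro k
      induction k with
      | zero => exact le_rfl
      | succ k ih =>
        have := step (k + 1) (Nat.le_add_left 1 k)
        simpa using this.trans ih
    refine ⟨hstarmin _ (memK m), step m hm, chain (m - 1), ?_⟩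
    rw [h0]
    exact objJ2_self τ ξ c Ψ v

end
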